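/- Let Φ : A → B be a generalized channel with minimal Kraus representation Φ(a) = Σ_k V_k a V_k*, and let Φ^C : A → D = ⊕_{i,j} B(C^{n_{i,j}}) be the conjugate map Φ^C(a) = ⊕_{i,j} Σ_{k,l ∈ I(i,j)} Tr(V_k a V_l*) |k⟩⟨l|. Then Φ is an extreme point of C_J(A,B) if and only if Φ^C(J) = D. -/

import Mathlib

open Matrix ComplexOrder

variable {n m : Type*} [Fintype n] [DecidableEq n] [Fintype m] [DecidableEq m]

/-- Partial trace over the first tensor factor `B` of `B ⊗ A`,
realized on matrices indexed by products. -/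
noncomputable def ptrace (X : Matrix (m × n) (m × n) ℂ) : Matrix n n ℂ :=
  Matrix.of fun a b => ∑ i, X (i, a) (i, b)

/-- The Choi matrix of a linear map `Φ : A → B` (on full matrix algebras). -/
noncomputable def choi (Φ : Matrix n n ℂ →ₗ[ℂ] Matrix m m ℂ) : Matrix (m × n) (m × n) ℂ :=
  Matrix.of fun p q => Φ (Matrix.single p.2 q.2 1) p.1 q.1

/-- Hilbert–Schmidt orthogonal complement of a subspace. -/
noncomputable def hsPerp {k : Type*} [Fintype k] (J : Submodule ℂ (Matrix k k ℂ)) :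
    Submodule ℂ (Matrix k k ℂ) where
  carrier := {x | ∀ a ∈ J, Matrix.trace (aᴴ * x) = 0}
  add_mem' := by
    intro x y hx hy a ha
    simp [Matrix.mul_add, hx a ha, hy a ha]
  zero_mem' := by intro a ha; simp
  smul_mem' := by
    intro c x hx a ha
    simp [Matrix.mul_smul, hx a ha]

/-- Hilbert–Schmidt orthogonal complement of the transpose `J^T` of a subspace `J`. -/
def hsPerpT {k : Type*} [Fintype k] (J : Submodule ℂ (Matrix k k ℂ)) : Set (Matrix k k ℂ) :=
  {x | ∀ a ∈ J, Matrix.trace (aᵀᴴ * x) = 0}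

/-- A subspace is positively generated if it is spanned by its positive elements. -/
def PositivelyGenerated {k : Type*} [Fintype k] (J : Submodule ℂ (Matrix k k ℂ)) : Prop :=
  J = Submodule.span ℂ {a : Matrix k k ℂ | a ∈ J ∧ a.PosSemidef}

/-- `P` is the support projection of `X`: a Hermitian idempotent with the same range. -/
def IsSupportProj {k : Type*} [Fintype k] [DecidableEq k] (X P : Matrix k k ℂ) : Prop :=
  P.IsHermitian ∧ P * P = P ∧
    LinearMap.range (Matrix.toLin' P) = LinearMap.range (Matrix.toLin' X)

/-- The conjugate map `Φ^C(a)_{kl} = Tr(V_k a V_l*)` associated to a Kraus family. -/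
noncomputable def conjMap {N : ℕ} (V : Fin N → Matrix m n ℂ) :
    Matrix n n ℂ →ₗ[ℂ] Matrix (Fin N) (Fin N) ℂ where
  toFun a := Matrix.of fun k l => Matrix.trace (V k * a * (V l)ᴴ)
  map_add' a b := by
    ext k l
    simp [Matrix.mul_add, Matrix.add_mul]
  map_smul' c a := by
    ext k l
    simp [Matrix.mul_smul, Matrix.smul_mul]

/-!
Write `Φ = krausMap V 1`, where `krausMap V D a = ∑ k l, D k l • V k * a * (V l)ᴴ`; its Choi
matrix is `W D Wᴴ`, the columns of `W` being the flattened `V k`. As these are linearly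
independent, `D ↦ krausMap V D` is injective, and every completely positive `Ψ` whose Choi matrix
vanishes on `ker Wᴴ` is some `krausMap V D`.

If `Φ` lies in an open segment between `Ψ, Ψ' ∈ C_J`, the Choi matrices of `Ψ, Ψ'` vanish on the
kernel of that of `Φ`, so `Ψ = krausMap V D` with `tr (krausMap V (D - 1) a) = 0` on `J`.
Conversely, a nonzero Hermitian `D` with `tr (krausMap V D a) = 0` on `J` makes `Φ` the midpoint
of `krausMap V (1 ± ε D) ∈ C_J`, and since `J` is closed under `ᴴ` such a Hermitian `D` exists as
soon as a nonzero one does. Hence `Φ` is extreme iff no nonzero `D` annihilates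
`a ↦ tr (krausMap V D a) = tr (Dᵀ * Φ^C a)` on `J`, i.e. iff `Φ^C (J)` is everything.
-/

open scoped Matrix.Norms.L2Operator MatrixOrder in
theorem Matrix.IsHermitian.exists_posSemidef_one_add_smul_and_one_sub_smul
    {ι : Type*} [Fintype ι] [DecidableEq ι] {D : Matrix ι ι ℂ} (hD : D.IsHermitian) :
    ∃ ε : ℝ, 0 < ε ∧ (1 + (ε : ℂ) • D).PosSemidef ∧ (1 - (ε : ℂ) • D).PosSemidef := by
  have key : ∀ E : Matrix ι ι ℂ, E ≤ algebraMap ℝ _ ‖D‖ →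
      (1 - (((‖D‖ + 1)⁻¹ : ℝ) : ℂ) • E).PosSemidef := by
    intro E hE
    have hc : 0 < ‖D‖ + 1 := by positivity
    have : 1 - (((‖D‖ + 1)⁻¹ : ℝ) : ℂ) • E
        = (((‖D‖ + 1)⁻¹ : ℝ) : ℂ) • ((algebraMap ℝ _ ‖D‖ - E) + 1) := by
      rw [Algebra.algebraMap_eq_smul_one, Complex.coe_smul, Complex.coe_smul]
      match_scalars <;> field_simp
    rw [this]
    exact ((le_iff.mp hE).add PosSemidef.one).smul (by positivity)
  refine ⟨(‖D‖ + 1)⁻¹, by positivity, ?_, key D hD.isSelfAdjoint.le_algebraMap_norm_self⟩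
  have := key (-D) (neg_le.mpr hD.isSelfAdjoint.neg_algebraMap_norm_le_self)
  rwa [smul_neg, sub_neg_eq_add] at this

theorem Matrix.PosSemidef.mulVec_eq_zero_of_add {α 𝕜 : Type*} [Fintype α] [RCLike 𝕜]
    {A B : Matrix α α 𝕜} (hA : A.PosSemidef) (hB : B.PosSemidef) {x : α → 𝕜}
    (h : (A + B) *ᵥ x = 0) : A *ᵥ x = 0 := by
  have hsum : star x ⬝ᵥ A *ᵥ x + star x ⬝ᵥ B *ᵥ x = 0 := by
    rw [← dotProduct_add, ← add_mulVec, h, dotProduct_zero]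
  rw [← hA.dotProduct_mulVec_zero_iff]
  exact ((add_eq_zero_iff_of_nonneg (hA.dotProduct_mulVec_nonneg x)
    (hB.dotProduct_mulVec_nonneg x)).mp hsum).1

theorem Matrix.PosSemidef.mulVec_eq_zero_of_mem_openSegment {α : Type*} [Fintype α]
    {A B C : Matrix α α ℂ} (hA : A.PosSemidef) (hB : B.PosSemidef)
    (hC : C ∈ openSegment ℝ A B) {x : α → ℂ} (hx : C *ᵥ x = 0) : A *ᵥ x = 0 := by
  obtain ⟨t, s, ht, hs, -, rfl⟩ := hC
  have h := (hA.smul ht.le).mulVec_eq_zero_of_add (hB.smul hs.le) hx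
  rwa [smul_mulVec, smul_eq_zero_iff_right ht.ne'] at h

theorem Matrix.exists_mul_eq_one_of_mulVec_injective {𝕜 α ι : Type*} [RCLike 𝕜] [Fintype α]
    [Fintype ι] [DecidableEq ι] {W : Matrix α ι 𝕜} (hW : Function.Injective W.mulVec) :
    ∃ L : Matrix ι α 𝕜, L * W = 1 := by
  have hG : IsUnit (Wᴴ * W).det :=
    (isUnit_iff_isUnit_det _).mp (PosDef.conjTranspose_mul_self W hW).isUnit
  exact ⟨(Wᴴ * W)⁻¹ * Wᴴ, by rw [Matrix.mul_assoc, nonsing_inv_mul _ hG]⟩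

section LeftInverse

variable {R α ι : Type*} [CommRing R] [StarRing R] [Fintype α] [Fintype ι] [DecidableEq ι]
  {W : Matrix α ι R} {L : Matrix ι α R}

theorem Matrix.mul_mul_conjTranspose_injective_of_mul_eq_one (hL : L * W = 1) :
    Function.Injective fun D : Matrix ι ι R => W * D * Wᴴ := by
  intro D D' h
  have hLW : Wᴴ * Lᴴ = 1 := by rw [← conjTranspose_mul, hL, conjTranspose_one]
  simpa only [Matrix.mul_assoc, hLW, Matrix.mul_one, ← Matrix.mul_assoc L, hL, Matrix.one_mul]
    using congrArg (fun C => L * C * Lᴴ) h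

theorem Matrix.exists_eq_mul_mul_conjTranspose_of_mul_eq_one (hL : L * W = 1)
    {C : Matrix α α R} (hC : C.IsHermitian) (hker : ∀ x, Wᴴ *ᵥ x = 0 → C *ᵥ x = 0) :
    ∃ D : Matrix ι ι R, C = W * D * Wᴴ := by
  have hLW : Wᴴ * Lᴴ = 1 := by rw [← conjTranspose_mul, hL, conjTranspose_one]
  have hright : C * (Lᴴ * Wᴴ) = C := by
    refine ext_iff_mulVec.mpr fun x => ?_
    have hx : Wᴴ *ᵥ (x - Lᴴ *ᵥ Wᴴ *ᵥ x) = 0 := by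
      rw [mulVec_sub, mulVec_mulVec, hLW, one_mulVec, sub_self]
    rw [← mulVec_mulVec, ← mulVec_mulVec, ← sub_eq_zero, ← mulVec_sub, ← neg_sub, mulVec_neg,
      hker _ hx, neg_zero]
  have hleft : W * L * C = C := by
    simpa [conjTranspose_mul, hC.eq, Matrix.mul_assoc] using congrArg conjTranspose hright
  refine ⟨L * C * Lᴴ, ?_⟩
  calc C = W * L * (C * (Lᴴ * Wᴴ)) := by rw [hright, hleft]
    _ = W * (L * C * Lᴴ) * Wᴴ := by simp only [Matrix.mul_assoc]

end LeftInverse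

theorem Matrix.exists_trace_mul_eq {R ι : Type*} [CommSemiring R] [Fintype ι] [DecidableEq ι]
    (f : Module.Dual R (Matrix ι ι R)) : ∃ X : Matrix ι ι R, ∀ M, f M = trace (X * M) := by
  set X : Matrix ι ι R := of fun j i => f (single i j 1)
  have hf : f = traceLinearMap ι R R ∘ₗ LinearMap.mulLeft R X :=
    ext_linearMap R fun i j => LinearMap.ext_ring (by simp [X, trace_mul_single])
  exact ⟨X, fun M => LinearMap.congr_fun hf M⟩

theorem PositivelyGenerated.conjTranspose_mem {k : Type*} [Fintype k]
    {J : Submodule ℂ (Matrix k k ℂ)} (hJ : PositivelyGenerated J) {a : Matrix k k ℂ}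
    (ha : a ∈ J) : aᴴ ∈ J := by
  rw [hJ] at ha ⊢
  induction ha using Submodule.span_induction with
  | mem x hx => rw [hx.2.isHermitian.eq]; exact Submodule.subset_span hx
  | zero => simp
  | add x y _ _ hx hy => rw [conjTranspose_add]; exact add_mem hx hy
  | smul c x _ hx => rw [conjTranspose_smul]; exact Submodule.smul_mem _ _ hx

theorem Submodule.exists_isSelfAdjoint_ne_zero {A : Type*} [AddCommGroup A] [Module ℂ A]
    [StarAddMonoid A] [StarModule ℂ A] {S : Submodule ℂ A} (hS : ∀ x ∈ S, star x ∈ S)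
    (h : S ≠ ⊥) : ∃ y ∈ S, IsSelfAdjoint y ∧ y ≠ 0 := by
  obtain ⟨x, hxS, hx0⟩ := S.exists_mem_ne_zero_of_ne_bot h
  have hre : (realPart x : A) ∈ S := by
    rw [realPart_apply_coe]
    exact S.smul_of_tower_mem _ (S.add_mem hxS (hS x hxS))
  have him : (imaginaryPart x : A) ∈ S := by
    rw [imaginaryPart_apply_coe]
    exact S.smul_mem _ (S.smul_of_tower_mem _ (S.sub_mem hxS (hS x hxS)))
  by_contra! hall
  apply hx0
  rw [← realPart_add_I_smul_imaginaryPart x, hall _ hre (realPart x).2,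
    hall _ him (imaginaryPart x).2, smul_zero, add_zero]

section KrausMap

variable {H K ι : Type*}

noncomputable def krausMap [Fintype H] [Fintype ι] (V : ι → Matrix K H ℂ) :
    Matrix ι ι ℂ →ₗ[ℂ] Matrix H H ℂ →ₗ[ℂ] Matrix K K ℂ :=
  LinearMap.mk₂ ℂ (fun D a => ∑ k, ∑ l, D k l • (V k * a * (V l)ᴴ))
    (fun D D' a => by simp only [Matrix.add_apply, add_smul, Finset.sum_add_distrib])
    (fun c D a => by simp only [Matrix.smul_apply, smul_eq_mul, mul_smul, Finset.smul_sum])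
    (fun D a a' => by
      simp only [Matrix.mul_add, Matrix.add_mul, smul_add, Finset.sum_add_distrib])
    (fun c D a => by simp only [Matrix.mul_smul, Matrix.smul_mul, smul_comm c, Finset.smul_sum])

theorem krausMap_apply [Fintype H] [Fintype ι] (V : ι → Matrix K H ℂ) (D : Matrix ι ι ℂ)
    (a : Matrix H H ℂ) : krausMap V D a = ∑ k, ∑ l, D k l • (V k * a * (V l)ᴴ) :=
  rfl

theorem krausMap_one_apply [Fintype H] [Fintype ι] [DecidableEq ι] (V : ι → Matrix K H ℂ)
    (a : Matrix H H ℂ) : krausMap V 1 a = ∑ k, V k * a * (V k)ᴴ := by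
  simp [krausMap_apply, one_apply, ite_smul]

def krausVec (V : ι → Matrix K H ℂ) : Matrix (K × H) ι ℂ :=
  of fun p k => V k p.1 p.2

theorem krausVec_mulVec_injective [Fintype ι] {V : ι → Matrix K H ℂ}
    (hV : LinearIndependent ℂ V) : Function.Injective (krausVec V).mulVec := by
  rw [mulVec_injective_iff]
  exact hV.map' (LinearEquiv.curry ℂ ℂ K H).symm.toLinearMap (LinearEquiv.ker _)

theorem choi_krausMap [Fintype H] [DecidableEq H] [Fintype ι] (V : ι → Matrix K H ℂ)
    (D : Matrix ι ι ℂ) : choi (krausMap V D) = krausVec V * D * (krausVec V)ᴴ := by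
  ext ⟨p, i⟩ ⟨q, j⟩
  simp only [choi, single, ite_and, krausMap_apply, Matrix.sum_apply, Matrix.smul_apply,
    mul_apply, of_apply, mul_ite, mul_one, mul_zero, Finset.sum_ite_eq, Finset.mem_univ,
    ↓reduceIte, conjTranspose_apply, RCLike.star_def, ite_mul, zero_mul, smul_eq_mul, krausVec,
    Finset.sum_mul]
  rw [Finset.sum_comm]
  exact Finset.sum_congr rfl fun _ _ => Finset.sum_congr rfl fun _ _ => by ring

theorem choi_injective [Fintype H] [DecidableEq H] :
    Function.Injective (choi : (Matrix H H ℂ →ₗ[ℂ] Matrix K K ℂ) → _) := by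
  intro Ψ Ψ' h
  refine ext_linearMap ℂ fun i j => LinearMap.ext_ring ?_
  ext p q
  exact congrFun₂ h (p, i) (q, j)

theorem krausMap_injective [Fintype H] [Fintype K] [Fintype ι] {V : ι → Matrix K H ℂ}
    (hV : LinearIndependent ℂ V) : Function.Injective (krausMap V) := by
  classical
  obtain ⟨L, hL⟩ := exists_mul_eq_one_of_mulVec_injective (krausVec_mulVec_injective hV)
  intro D D' h
  apply mul_mul_conjTranspose_injective_of_mul_eq_one hL
  simpa only [choi_krausMap] using congrArg choi h

theorem exists_krausMap_eq [Fintype H] [DecidableEq H] [Fintype K] [Fintype ι]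
    {V : ι → Matrix K H ℂ} (hV : LinearIndependent ℂ V) {Ψ : Matrix H H ℂ →ₗ[ℂ] Matrix K K ℂ}
    (hΨ : (choi Ψ).IsHermitian) (hker : ∀ x, (krausVec V)ᴴ *ᵥ x = 0 → choi Ψ *ᵥ x = 0) :
    ∃ D, krausMap V D = Ψ := by
  classical
  obtain ⟨L, hL⟩ := exists_mul_eq_one_of_mulVec_injective (krausVec_mulVec_injective hV)
  obtain ⟨D, hD⟩ := exists_eq_mul_mul_conjTranspose_of_mul_eq_one hL hΨ hker
  exact ⟨D, choi_injective (by rw [choi_krausMap, hD])⟩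

theorem exists_krausMap_eq_of_mem_openSegment [Fintype H] [DecidableEq H] [Fintype K]
    [Fintype ι] [DecidableEq ι] {V : ι → Matrix K H ℂ} (hV : LinearIndependent ℂ V)
    {Ψ Ψ' : Matrix H H ℂ →ₗ[ℂ] Matrix K K ℂ} (hΨ : (choi Ψ).PosSemidef)
    (hΨ' : (choi Ψ').PosSemidef) (h : krausMap V 1 ∈ openSegment ℝ Ψ Ψ') :
    ∃ D, krausMap V D = Ψ := by
  refine exists_krausMap_eq hV hΨ.isHermitian fun x hx => ?_
  have hchoi : choi (krausMap V 1) ∈ openSegment ℝ (choi Ψ) (choi Ψ') := by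
    obtain ⟨t, s, ht, hs, hts, h⟩ := h
    exact ⟨t, s, ht, hs, hts, by rw [← h]; rfl⟩
  refine hΨ.mulVec_eq_zero_of_mem_openSegment hΨ' hchoi ?_
  rw [choi_krausMap, Matrix.mul_one, ← mulVec_mulVec, hx, mulVec_zero]

theorem conjTranspose_krausMap_apply [Fintype H] [Fintype ι] (V : ι → Matrix K H ℂ)
    (D : Matrix ι ι ℂ) (a : Matrix H H ℂ) : (krausMap V D a)ᴴ = krausMap V Dᴴ aᴴ := by
  simp only [krausMap_apply, conjTranspose_sum, conjTranspose_smul, conjTranspose_mul,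
    conjTranspose_conjTranspose, conjTranspose_apply, Matrix.mul_assoc]
  exact Finset.sum_comm

def traceAnnihilator [Fintype H] [Fintype K] [Fintype ι] (V : ι → Matrix K H ℂ)
    (J : Submodule ℂ (Matrix H H ℂ)) : Submodule ℂ (Matrix ι ι ℂ) where
  carrier := {D | ∀ a ∈ J, trace (krausMap V D a) = 0}
  add_mem' hD hE a ha := by simp [hD a ha, hE a ha]
  zero_mem' a _ := by simp
  smul_mem' c D hD a ha := by simp [hD a ha]

theorem mem_traceAnnihilator [Fintype H] [Fintype K] [Fintype ι] {V : ι → Matrix K H ℂ}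
    {J : Submodule ℂ (Matrix H H ℂ)} {D : Matrix ι ι ℂ} :
    D ∈ traceAnnihilator V J ↔ ∀ a ∈ J, trace (krausMap V D a) = 0 :=
  Iff.rfl

theorem conjTranspose_mem_traceAnnihilator [Fintype H] [Fintype K] [Fintype ι]
    {V : ι → Matrix K H ℂ} {J : Submodule ℂ (Matrix H H ℂ)} (hJ : ∀ a ∈ J, aᴴ ∈ J)
    {D : Matrix ι ι ℂ} (hD : D ∈ traceAnnihilator V J) : Dᴴ ∈ traceAnnihilator V J := by
  intro a ha
  rw [← conjTranspose_conjTranspose a, ← conjTranspose_krausMap_apply, trace_conjTranspose,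
    hD _ (hJ a ha), star_zero]

theorem trace_krausMap_apply [Fintype H] [Fintype K] {N : ℕ} (V : Fin N → Matrix K H ℂ)
    (D : Matrix (Fin N) (Fin N) ℂ) (a : Matrix H H ℂ) :
    trace (krausMap V D a) = trace (Dᵀ * conjMap V a) := by
  simp only [krausMap_apply, trace_sum, trace_smul, smul_eq_mul]
  exact Finset.sum_comm

theorem map_conjMap_eq_top_iff [Fintype H] [Fintype K] {N : ℕ} (V : Fin N → Matrix K H ℂ)
    (J : Submodule ℂ (Matrix H H ℂ)) : J.map (conjMap V) = ⊤ ↔ traceAnnihilator V J = ⊥ := by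
  simp only [← Submodule.dualAnnihilator_eq_bot_iff, Submodule.eq_bot_iff,
    Submodule.mem_dualAnnihilator, mem_traceAnnihilator, trace_krausMap_apply]
  simp only [Submodule.mem_map, forall_exists_index, and_imp, forall_apply_eq_imp_iff₂]
  constructor
  · intro h D hD
    have := h (traceLinearMap _ ℂ ℂ ∘ₗ LinearMap.mulLeft ℂ Dᵀ) hD
    rw [← transpose_eq_zero]
    exact ext_iff_trace_mul_right.mpr fun x => by simpa using LinearMap.congr_fun this x
  · intro h f hf
    obtain ⟨X, hX⟩ := exists_trace_mul_eq f
    have hX0 : Xᵀ = 0 := h Xᵀ (by simpa only [transpose_transpose, ← hX] using hf)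
    ext M
    simp [hX, transpose_eq_zero.mp hX0]

def generalizedChannels [Fintype H] [DecidableEq H] [Fintype K]
    (J : Submodule ℂ (Matrix H H ℂ)) : Set (Matrix H H ℂ →ₗ[ℂ] Matrix K K ℂ) :=
  {Ψ | (choi Ψ).PosSemidef ∧ ∀ a ∈ J, trace (Ψ a) = trace a}

theorem krausMap_one_add_mem_generalizedChannels [Fintype H] [DecidableEq H] [Fintype K]
    [Fintype ι] [DecidableEq ι] {V : ι → Matrix K H ℂ} {J : Submodule ℂ (Matrix H H ℂ)}
    (hΦ : krausMap V 1 ∈ generalizedChannels J) {E : Matrix ι ι ℂ}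
    (hE : E ∈ traceAnnihilator V J) (hpos : (1 + E).PosSemidef) :
    krausMap V (1 + E) ∈ generalizedChannels J := by
  refine ⟨?_, fun a ha => ?_⟩
  · rw [choi_krausMap]
    exact hpos.mul_mul_conjTranspose_same _
  · rw [map_add, LinearMap.add_apply, trace_add, hΦ.2 a ha, hE a ha, add_zero]

theorem traceAnnihilator_eq_bot_of_mem_extremePoints [Fintype H] [DecidableEq H] [Fintype K]
    [Fintype ι] [DecidableEq ι] {V : ι → Matrix K H ℂ} (hV : LinearIndependent ℂ V)
    {J : Submodule ℂ (Matrix H H ℂ)} (hJ : ∀ a ∈ J, aᴴ ∈ J)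
    (hΦ : krausMap V 1 ∈ (generalizedChannels J).extremePoints ℝ) :
    traceAnnihilator V J = ⊥ := by
  by_contra hne
  obtain ⟨D, hD, hDsa, hD0⟩ := Submodule.exists_isSelfAdjoint_ne_zero
    (fun _ => conjTranspose_mem_traceAnnihilator hJ) hne
  obtain ⟨ε, hε, hplus, hminus⟩ :=
    (isHermitian_iff_isSelfAdjoint.mpr hDsa).exists_posSemidef_one_add_smul_and_one_sub_smul
  have hE : (ε : ℂ) • D ∈ traceAnnihilator V J := Submodule.smul_mem _ _ hD
  rw [sub_eq_add_neg] at hminus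
  have hseg : krausMap V 1 ∈ openSegment ℝ (krausMap V (1 + (ε : ℂ) • D))
      (krausMap V (1 + -((ε : ℂ) • D))) := by
    rw [map_add, map_add, map_neg, ← sub_eq_add_neg]
    exact mem_openSegment_add_sub _ _
  have h := krausMap_injective hV <| hΦ.2
    (krausMap_one_add_mem_generalizedChannels hΦ.1 hE hplus)
    (krausMap_one_add_mem_generalizedChannels hΦ.1 (neg_mem hE) hminus) hseg
  rw [add_eq_left, smul_eq_zero, Complex.ofReal_eq_zero] at h
  exact h.elim hε.ne' hD0

theorem krausMap_one_mem_extremePoints [Fintype H] [DecidableEq H] [Fintype K] [Fintype ι]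
    [DecidableEq ι] {V : ι → Matrix K H ℂ} (hV : LinearIndependent ℂ V)
    {J : Submodule ℂ (Matrix H H ℂ)} (hΦ : krausMap V 1 ∈ generalizedChannels J)
    (hJ : traceAnnihilator V J = ⊥) :
    krausMap V 1 ∈ (generalizedChannels J).extremePoints ℝ := by
  refine ⟨hΦ, fun Ψ hΨ Ψ' hΨ' hseg => ?_⟩
  obtain ⟨D, rfl⟩ := exists_krausMap_eq_of_mem_openSegment hV hΨ.1 hΨ'.1 hseg
  have hD : D - 1 ∈ traceAnnihilator V J := fun a ha => by
    rw [map_sub, LinearMap.sub_apply, trace_sub, hΨ.2 a ha, hΦ.2 a ha, sub_self]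
  rw [hJ, Submodule.mem_bot, sub_eq_zero] at hD
  rw [hD]

end KrausMap

/-- a generalized channel `Φ` with minimal Kraus representation
`Φ(a) = Σ_k V_k a V_k*` is an extreme point of `C_J(A,B)` iff its conjugate map
satisfies `Φ^C(J) = D`. -/
theorem extreme_iff_conjMap_surjective
    (J : Submodule ℂ (Matrix n n ℂ)) (hJ : PositivelyGenerated J)
    {N : ℕ} (V : Fin N → Matrix m n ℂ) (hV : LinearIndependent ℂ V)
    (Φ : Matrix n n ℂ →ₗ[ℂ] Matrix m m ℂ)
    (hΦ : ∀ a : Matrix n n ℂ, Φ a = ∑ k, V k * a * (V k)ᴴ)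
    (hΦtp : ∀ a ∈ J, Matrix.trace (Φ a) = Matrix.trace a) :
    Φ ∈ Set.extremePoints ℝ
        {Ψ : Matrix n n ℂ →ₗ[ℂ] Matrix m m ℂ |
          (choi Ψ).PosSemidef ∧ ∀ a ∈ J, Matrix.trace (Ψ a) = Matrix.trace a} ↔
      Submodule.map (conjMap V) J = ⊤ := by
  obtain rfl : Φ = krausMap V 1 := LinearMap.ext fun a => by rw [hΦ, krausMap_one_apply]
  have hΦC : krausMap V 1 ∈ generalizedChannels J := by
    refine ⟨?_, hΦtp⟩
    rw [choi_krausMap, Matrix.mul_one]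
    exact posSemidef_self_mul_conjTranspose _
  rw [map_conjMap_eq_top_iff]
  exact ⟨traceAnnihilator_eq_bot_of_mem_extremePoints hV (fun _ => hJ.conjTranspose_mem),
    krausMap_one_mem_extremePoints hV hΦC⟩
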